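/- arXiv:1908.00098 — 2 statements merged into one kernel-verified Lean document; each statement's English description precedes it below -/
import Mathlib

section
/- A submonoid P of a free monoid A* is free (i.e., every element of P factors uniquely as a product of elements of the minimal generating set of P) if and only if for every word w ∈ A*, whenever there exist p, q ∈ P with p*w ∈ P and w*q ∈ P, one has w ∈ P. -/
open scoped Pointwise

/-- The minimal generating set `(P \ {1}) \ (P \ {1})²` of a submonoid of a free monoid. -/
def MinGenSet {A : Type*} (P : Submonoid (FreeMonoid A)) : Set (FreeMonoid A) :=
  ((P : Set (FreeMonoid A)) \ {1}) \
    (((P : Set (FreeMonoid A)) \ {1}) * ((P : Set (FreeMonoid A)) \ {1}))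

namespace StmtAux

open FreeMonoid

variable {A : Type*}

lemma eq_one_iff (w : FreeMonoid A) : w = 1 ↔ (toList w).length = 0 := by
  constructor
  · rintro rfl; rfl
  · intro h
    have : toList w = [] := List.length_eq_zero_iff.mp h
    exact toList.injective this

lemma len_mul (u v : FreeMonoid A) :
    (toList (u * v)).length = (toList u).length + (toList v).length := by
  rw [toList_mul, List.length_append]

/-- If `x * a = y * b` and `|x| ≤ |y|` then `x` is a prefix of `y`. -/
lemma prefix_of_mul_eq {x y a b : FreeMonoid A} (h : x * a = y * b)
    (hlen : (toList x).length ≤ (toList y).length) : ∃ w, y = x * w := by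
  have h' : toList x ++ toList a = toList y ++ toList b := by
    have := congrArg toList h
    simpa [toList_mul] using this
  rcases List.append_eq_append_iff.mp h' with ⟨a', ha', _⟩ | ⟨c', hc', _⟩
  · exact ⟨ofList a', toList.injective (by simp [toList_mul, ha'])⟩
  · have : (toList x).length = (toList y).length + c'.length := by
      rw [hc', List.length_append]
    have hc0 : c'.length = 0 := by omega
    have : c' = [] := List.length_eq_zero_iff.mp hc0
    subst this
    refine ⟨1, ?_⟩
    have : toList x = toList y := by simpa using hc'
    have hxy : x = y := toList.injective this
    simp [hxy]

lemma mem_P_of_mem_gen {P : Submonoid (FreeMonoid A)} {x : FreeMonoid A}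
    (hx : x ∈ MinGenSet P) : x ∈ P := hx.1.1

lemma ne_one_of_mem_gen {P : Submonoid (FreeMonoid A)} {x : FreeMonoid A}
    (hx : x ∈ MinGenSet P) : x ≠ 1 := hx.1.2

lemma prod_mem_P {P : Submonoid (FreeMonoid A)} {l : List (FreeMonoid A)}
    (hl : ∀ x ∈ l, x ∈ MinGenSet P) : l.prod ∈ P := by
  induction l with
  | nil => exact P.one_mem
  | cons x t ih =>
      simp only [List.prod_cons]
      exact P.mul_mem (mem_P_of_mem_gen (hl x (by simp)))
        (ih fun y hy => hl y (by simp [hy]))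

lemma prod_ne_one {P : Submonoid (FreeMonoid A)} {x : FreeMonoid A} {t : List (FreeMonoid A)}
    (hx : x ∈ MinGenSet P) : (x :: t).prod ≠ 1 := by
  intro h
  rw [List.prod_cons] at h
  have := congrArg (fun w => (toList w).length) h
  simp only [len_mul] at this
  have hx1 : (toList x).length ≠ 0 := fun h => ne_one_of_mem_gen hx ((eq_one_iff x).mpr h)
  simp only [toList_one, List.length_nil] at this
  omega

/-- Existence of factorizations over the minimal generating set. -/
lemma exists_factorization {P : Submonoid (FreeMonoid A)} :
    ∀ n (w : FreeMonoid A), (toList w).length ≤ n → w ∈ P →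
      ∃ l : List (FreeMonoid A), (∀ x ∈ l, x ∈ MinGenSet P) ∧ l.prod = w := by
  intro n
  induction n with
  | zero =>
      intro w hw _
      have : w = 1 := (eq_one_iff w).mpr (by omega)
      exact ⟨[], by simp, by simp [this]⟩
  | succ n ih =>
      intro w hw hwP
      by_cases h1 : w = 1
      · exact ⟨[], by simp, by simp [h1]⟩
      by_cases hg : w ∈ MinGenSet P
      · exact ⟨[w], by simpa using hg, by simp⟩
      · have hw' : w ∈ ((P : Set (FreeMonoid A)) \ {1}) := ⟨hwP, h1⟩
        have hmem : w ∈ (((P : Set (FreeMonoid A)) \ {1}) * ((P : Set (FreeMonoid A)) \ {1})) := by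
          by_contra hc
          exact hg ⟨hw', hc⟩
        rcases hmem with ⟨u, hu, v, hv, huv⟩
        have hu1 : (toList u).length ≠ 0 := fun h => hu.2 ((eq_one_iff u).mpr h)
        have hv1 : (toList v).length ≠ 0 := fun h => hv.2 ((eq_one_iff v).mpr h)
        have hlw : (toList w).length = (toList u).length + (toList v).length := by
          rw [← huv, len_mul]
        obtain ⟨lu, hlu, hlup⟩ := ih u (by omega) hu.1
        obtain ⟨lv, hlv, hlvp⟩ := ih v (by omega) hv.1
        refine ⟨lu ++ lv, ?_, ?_⟩
        · intro x hx
          rcases List.mem_append.mp hx with h | h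
          · exact hlu x h
          · exact hlv x h
        · rw [List.prod_append, hlup, hlvp]; exact huv

/-- Uniqueness of factorizations, assuming the stability criterion. -/
lemma unique_factorization {P : Submonoid (FreeMonoid A)}
    (hcrit : ∀ w : FreeMonoid A, (∃ p ∈ P, ∃ q ∈ P, p * w ∈ P ∧ w * q ∈ P) → w ∈ P) :
    ∀ (l l' : List (FreeMonoid A)), (∀ x ∈ l, x ∈ MinGenSet P) →
      (∀ x ∈ l', x ∈ MinGenSet P) → l.prod = l'.prod → l = l' := by
  intro l
  induction l with
  | nil =>
      intro l' _ hl' hp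
      cases l' with
      | nil => rfl
      | cons y t' =>
          exact absurd hp.symm (prod_ne_one (hl' y (by simp)))
  | cons x t ih =>
      intro l' hl hl' hp
      cases l' with
      | nil => exact absurd hp (prod_ne_one (hl x (by simp)))
      | cons y t' =>
          have hx : x ∈ MinGenSet P := hl x (by simp)
          have hy : y ∈ MinGenSet P := hl' y (by simp)
          have ht : ∀ z ∈ t, z ∈ MinGenSet P := fun z hz => hl z (by simp [hz])
          have ht' : ∀ z ∈ t', z ∈ MinGenSet P := fun z hz => hl' z (by simp [hz])
          simp only [List.prod_cons] at hp
          have hxy : x = y := by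
            rcases le_total (toList x).length (toList y).length with hle | hle
            · obtain ⟨w, hw⟩ := prefix_of_mul_eq hp hle
              -- y = x * w ; show w = 1
              have hw1 : w ∈ P := by
                apply hcrit
                refine ⟨x, mem_P_of_mem_gen hx, t'.prod, prod_mem_P ht', ?_, ?_⟩
                · rw [← hw]; exact mem_P_of_mem_gen hy
                · have : x * (w * t'.prod) = x * t.prod := by
                    rw [← mul_assoc, ← hw, hp]
                  have h2 : w * t'.prod = t.prod := mul_left_cancel this
                  rw [h2]; exact prod_mem_P ht
              by_cases hone : w = 1
              · rw [hw, hone, mul_one]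
              · exfalso
                apply hy.2
                exact ⟨x, ⟨mem_P_of_mem_gen hx, ne_one_of_mem_gen hx⟩, w, ⟨hw1, hone⟩, hw.symm⟩
            · obtain ⟨w, hw⟩ := prefix_of_mul_eq hp.symm hle
              -- x = y * w
              have hw1 : w ∈ P := by
                apply hcrit
                refine ⟨y, mem_P_of_mem_gen hy, t.prod, prod_mem_P ht, ?_, ?_⟩
                · rw [← hw]; exact mem_P_of_mem_gen hx
                · have : y * (w * t.prod) = y * t'.prod := by
                    rw [← mul_assoc, ← hw, hp]
                  have h2 : w * t.prod = t'.prod := mul_left_cancel this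
                  rw [h2]; exact prod_mem_P ht'
              by_cases hone : w = 1
              · rw [hw, hone, mul_one]
              · exfalso
                apply hx.2
                exact ⟨y, ⟨mem_P_of_mem_gen hy, ne_one_of_mem_gen hy⟩, w, ⟨hw1, hone⟩, hw.symm⟩
          subst hxy
          have htp : t.prod = t'.prod := mul_left_cancel hp
          rw [ih t' ht ht' htp]

end StmtAux

/-- Lothaire's criterion: a submonoid `P` of a free monoid is free (every element factors
uniquely over the minimal generating set) iff whenever `p*w ∈ P` and `w*q ∈ P` for some
`p, q ∈ P`, one has `w ∈ P`. -/
theorem stmt_2 {A : Type*} (P : Submonoid (FreeMonoid A)) :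
    (∀ w ∈ P, ∃! l : List (FreeMonoid A), (∀ x ∈ l, x ∈ MinGenSet P) ∧ l.prod = w) ↔
    (∀ w : FreeMonoid A, (∃ p ∈ P, ∃ q ∈ P, p * w ∈ P ∧ w * q ∈ P) → w ∈ P) := by
  constructor
  · -- free ⇒ criterion
    intro hfree w ⟨p, hp, q, hq, hpw, hwq⟩
    obtain ⟨L1, ⟨hL1, hL1p⟩, -⟩ := hfree (p * w) hpw
    obtain ⟨L2, ⟨hL2, hL2p⟩, -⟩ := hfree q hq
    obtain ⟨L3, ⟨hL3, hL3p⟩, -⟩ := hfree p hp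
    obtain ⟨L4, ⟨hL4, hL4p⟩, -⟩ := hfree (w * q) hwq
    obtain ⟨L, -, hLuniq⟩ := hfree (p * w * q) (P.mul_mem hpw hq)
    have e1 : L1 ++ L2 = L := by
      apply hLuniq
      refine ⟨fun x hx => ?_, by rw [List.prod_append, hL1p, hL2p]⟩
      rcases List.mem_append.mp hx with h | h
      · exact hL1 x h
      · exact hL2 x h
    have e2 : L3 ++ L4 = L := by
      apply hLuniq
      refine ⟨fun x hx => ?_, ?_⟩
      · rcases List.mem_append.mp hx with h | h
        · exact hL3 x h
        · exact hL4 x h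
      · rw [List.prod_append, hL3p, hL4p, mul_assoc]
    have e : L1 ++ L2 = L3 ++ L4 := by rw [e1, e2]
    rcases List.append_eq_append_iff.mp e with ⟨a', ha', _⟩ | ⟨c', hc', _⟩
    · -- L3 = L1 ++ a' : then p = (p*w) * a'.prod, so w = 1
      have h3 : L3.prod = (p * w) * a'.prod := by
        rw [ha', List.prod_append, hL1p]
      have hpeq : p = (p * w) * a'.prod := hL3p.symm.trans h3
      have := congrArg (fun u => (FreeMonoid.toList u).length) hpeq
      simp only [StmtAux.len_mul] at this
      have hw1 : w = 1 := (StmtAux.eq_one_iff w).mpr (by omega)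
      rw [hw1]; exact P.one_mem
    · -- L1 = L3 ++ c' : then p*w = p * c'.prod, so w = c'.prod ∈ P
      have hgen : ∀ x ∈ c', x ∈ MinGenSet P := fun x hx => hL1 x (by simp [hc', hx])
      have h1' : L1.prod = p * c'.prod := by
        rw [hc', List.prod_append, hL3p]
      have : p * w = p * c'.prod := hL1p.symm.trans h1'
      have hw : w = c'.prod := mul_left_cancel this
      rw [hw]
      exact StmtAux.prod_mem_P hgen
  · -- criterion ⇒ free
    intro hcrit w hw
    obtain ⟨l, hl, hlp⟩ := StmtAux.exists_factorization (P := P)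
      (FreeMonoid.toList w).length w le_rfl hw
    refine ⟨l, ⟨hl, hlp⟩, ?_⟩
    rintro l' ⟨hl', hl'p⟩
    exact StmtAux.unique_factorization hcrit l' l hl' hl (by rw [hl'p, hlp])
end

section
/- Every submonoid P of a free monoid A* has a unique minimal generating set with respect to inclusion, namely the set (P \ {1}) \ (P \ {1})², where 1 is the empty word. -/
open scoped Pointwise

/-!
An element of `P \ {1}` that is not a product of two elements of `P \ {1}` cannot be produced
from a generating set by multiplying, so it lies in every generating set; this holds in any
monoid. Conversely, when words have an additive length vanishing only at `1`, a decomposable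
element of `P \ {1}` factors into strictly shorter elements of `P \ {1}`, so induction on length
shows that the indecomposable elements generate `P`.
-/

namespace Submonoid

variable {M : Type*} [Monoid M]

def indecomposables (P : Submonoid M) : Set M :=
  ((P : Set M) \ {1}) \ (((P : Set M) \ {1}) * ((P : Set M) \ {1}))

theorem indecomposables_subset {P : Submonoid M} {S : Set M} (hS : closure S = P) :
    P.indecomposables ⊆ S := by
  subst hS
  suffices key : ∀ y ∈ closure S,
      y = 1 ∨ y ∈ S ∨ y ∈ ((closure S : Set M) \ {1}) * ((closure S : Set M) \ {1}) by
    rintro x ⟨⟨hx, hx1⟩, hdec⟩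
    rcases key x hx with h | h | h
    exacts [absurd h hx1, h, absurd h hdec]
  intro y hy
  induction hy using closure_induction with
  | mem y hy => exact .inr (.inl hy)
  | one => exact .inl rfl
  | mul y z hy hz ihy ihz =>
    by_cases hy1 : y = 1
    · rwa [hy1, one_mul]
    by_cases hz1 : z = 1
    · rwa [hz1, mul_one]
    exact .inr (.inr ⟨y, ⟨hy, hy1⟩, z, ⟨hz, hz1⟩, rfl⟩)

theorem le_closure_indecomposables (len : M → ℕ) (len_mul : ∀ a b, len (a * b) = len a + len b)
    (eq_one_of_len_eq_zero : ∀ a, len a = 0 → a = 1) (P : Submonoid M) :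
    P ≤ closure P.indecomposables := by
  intro x hx
  induction hn : len x using Nat.strong_induction_on generalizing x with
  | _ n ih =>
    by_cases hx1 : x = 1
    · exact hx1 ▸ one_mem _
    by_cases hdec : x ∈ ((P : Set M) \ {1}) * ((P : Set M) \ {1})
    · obtain ⟨a, ⟨ha, ha1⟩, b, ⟨hb, hb1⟩, rfl⟩ := hdec
      have hla : 0 < len a := Nat.pos_of_ne_zero (mt (eq_one_of_len_eq_zero a) ha1)
      have hlb : 0 < len b := Nat.pos_of_ne_zero (mt (eq_one_of_len_eq_zero b) hb1)
      rw [len_mul] at hn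
      exact mul_mem (ih (len a) (by omega) ha rfl) (ih (len b) (by omega) hb rfl)
    · exact subset_closure ⟨⟨hx, hx1⟩, hdec⟩

end Submonoid

/-- Every submonoid of a free monoid has a unique minimal generating set, namely
`(P \ {1}) \ (P \ {1})²`: this set generates `P` and is contained in any generating set. -/
theorem stmt_3 {A : Type*} (P : Submonoid (FreeMonoid A)) :
    Submonoid.closure (MinGenSet P) = P ∧
    ∀ S : Set (FreeMonoid A), Submonoid.closure S = P → MinGenSet P ⊆ S := by
  have hMin : MinGenSet P = P.indecomposables := rfl
  rw [hMin]
  refine ⟨le_antisymm ?_ ?_, fun S hS => Submonoid.indecomposables_subset hS⟩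
  · exact Submonoid.closure_le.mpr fun x hx => hx.1.1
  · exact P.le_closure_indecomposables FreeMonoid.length FreeMonoid.length_mul
      fun _ => FreeMonoid.length_eq_zero.mp
end
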